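/- Let (M,d) be a metric space with completion \bar M_C, let I=(a,b)⊆ℝ be a nonempty open interval, let x₀∈\bar M_C and Ω∈(a,b), and set P={(t',x')∈I×M : t'<Ω−d(x',x₀)} and F={(t',x')∈I×M : t'>Ω+d(x',x₀)}. Then P is an IP, F an IF, F⊆↑P, P⊆↓F, F is a maximal IF among IFs contained in ↑P, and P is a maximal IP among IPs contained in ↓F; that is, P∼_S F. -/

import Mathlib

open Set
open scoped ENNReal NNReal

noncomputable section

/-- The product spacetime `V = I × M`, `I = (a,b) ⊆ ℝ`, as a subset of `ℝ × M`. -/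
def Spacetime {M : Type*} [MetricSpace M] (a b : EReal) : Set (ℝ × M) :=
  {p | a < (p.1 : EReal) ∧ (p.1 : EReal) < b}

/-- The chronology relation on the product spacetime: `(t₀,x₀) ≪ (t₁,x₁)` iff both points
lie in `V = (a,b) × M` and `t₀ < t₁ - d(x₀,x₁)`. -/
def Chron {M : Type*} [MetricSpace M] (a b : EReal) (p q : ℝ × M) : Prop :=
  p ∈ Spacetime a b ∧ q ∈ Spacetime a b ∧ p.1 < q.1 - dist p.2 q.2

/-- The chronological past `I⁻(p)`. -/
def IminusPt {M : Type*} [MetricSpace M] (a b : EReal) (p : ℝ × M) : Set (ℝ × M) :=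
  {q | Chron a b q p}

/-- The chronological future `I⁺(p)`. -/
def IplusPt {M : Type*} [MetricSpace M] (a b : EReal) (p : ℝ × M) : Set (ℝ × M) :=
  {q | Chron a b p q}

/-- `I⁻[S]`. -/
def IminusSet {M : Type*} [MetricSpace M] (a b : EReal) (S : Set (ℝ × M)) : Set (ℝ × M) :=
  {q | ∃ s ∈ S, Chron a b q s}

/-- `I⁺[S]`. -/
def IplusSet {M : Type*} [MetricSpace M] (a b : EReal) (S : Set (ℝ × M)) : Set (ℝ × M) :=
  {q | ∃ s ∈ S, Chron a b s q}

/-- A past set: `P = I⁻[P]`. -/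
def IsPastSet {M : Type*} [MetricSpace M] (a b : EReal) (P : Set (ℝ × M)) : Prop :=
  IminusSet a b P = P

/-- A future set: `F = I⁺[F]`. -/
def IsFutureSet {M : Type*} [MetricSpace M] (a b : EReal) (F : Set (ℝ × M)) : Prop :=
  IplusSet a b F = F

/-- An indecomposable past set (IP). -/
def IsIP {M : Type*} [MetricSpace M] (a b : EReal) (P : Set (ℝ × M)) : Prop :=
  P.Nonempty ∧ IsPastSet a b P ∧
    ∀ P₁ P₂ : Set (ℝ × M), IsPastSet a b P₁ → IsPastSet a b P₂ → P = P₁ ∪ P₂ →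
      P₁ = P ∨ P₂ = P

/-- An indecomposable future set (IF). -/
def IsIF {M : Type*} [MetricSpace M] (a b : EReal) (F : Set (ℝ × M)) : Prop :=
  F.Nonempty ∧ IsFutureSet a b F ∧
    ∀ F₁ F₂ : Set (ℝ × M), IsFutureSet a b F₁ → IsFutureSet a b F₂ → F = F₁ ∪ F₂ →
      F₁ = F ∨ F₂ = F

/-- A terminal indecomposable past set (TIP): an IP that is not the past of any point of `V`. -/
def IsTIP {M : Type*} [MetricSpace M] (a b : EReal) (P : Set (ℝ × M)) : Prop :=
  IsIP a b P ∧ ∀ p ∈ Spacetime (M := M) a b, P ≠ IminusPt a b p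

/-- A terminal indecomposable future set (TIF). -/
def IsTIF {M : Type*} [MetricSpace M] (a b : EReal) (F : Set (ℝ × M)) : Prop :=
  IsIF a b F ∧ ∀ p ∈ Spacetime (M := M) a b, F ≠ IplusPt a b p

/-- The common future `↑P = I⁺[{q ∈ V : p ≪ q for all p ∈ P}]`. -/
def CommonFuture {M : Type*} [MetricSpace M] (a b : EReal) (P : Set (ℝ × M)) : Set (ℝ × M) :=
  IplusSet a b {q | q ∈ Spacetime a b ∧ ∀ p ∈ P, Chron a b p q}

/-- The common past `↓F = I⁻[{q ∈ V : q ≪ f for all f ∈ F}]`. -/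
def CommonPast {M : Type*} [MetricSpace M] (a b : EReal) (F : Set (ℝ × M)) : Set (ℝ × M) :=
  IminusSet a b {q | q ∈ Spacetime a b ∧ ∀ f ∈ F, Chron a b q f}

/-- `P ∼ₛ F`: `P` is a maximal IP among those contained in `↓F`, and `F` is a maximal IF
among those contained in `↑P`. -/
def SRel {M : Type*} [MetricSpace M] (a b : EReal) (P F : Set (ℝ × M)) : Prop :=
  IsIP a b P ∧ IsIF a b F ∧ P ⊆ CommonPast a b F ∧ F ⊆ CommonFuture a b P ∧
    (∀ P' : Set (ℝ × M), IsIP a b P' → P' ⊆ CommonPast a b F → P ⊆ P' → P' = P) ∧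
    (∀ F' : Set (ℝ × M), IsIF a b F' → F' ⊆ CommonFuture a b P → F ⊆ F' → F' = F)

/-- The chronological past `I⁻[γ]` of the curve `γ(t) = (t, c(t))`, `t ∈ D`. -/
def PastOfCurve {M : Type*} [MetricSpace M] (a b : EReal) (c : ℝ → M) (D : Set ℝ) :
    Set (ℝ × M) :=
  {q | ∃ t ∈ D, Chron a b q (t, c t)}

/-- The chronological future `I⁺[γ]` of the curve `γ(t) = (t, c(t))`, `t ∈ D`. -/
def FutureOfCurve {M : Type*} [MetricSpace M] (a b : EReal) (c : ℝ → M) (D : Set ℝ) :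
    Set (ℝ × M) :=
  {q | ∃ t ∈ D, Chron a b (t, c t) q}

/-- The Busemann function `b_c(x) = sup_{t ∈ D} (t - d(x, c(t))) ∈ ℝ ∪ {±∞}`. -/
def Busemann {M : Type*} [MetricSpace M] (c : ℝ → M) (D : Set ℝ) (x : M) : EReal :=
  sSup {y : EReal | ∃ t ∈ D, y = ((t - dist x (c t) : ℝ) : EReal)}

/-!
Write `f = d(·, x₀)` on `M`. Because `x₀` lies in the completion,
`|f x - f y| ≤ d(x, y) ≤ f x + f y` and `inf f = 0`. The first inequality makes `t + f x` and
`t - f x` increase along `≪`, so `P` is a past set and `F` a future set. The second gives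
`p ≪ q` as soon as `t_p + f x_p + f x_q < t_q`; since there are points of `V` arbitrarily close
to the ideal point `(Ω, x₀)`, every two points of `P` lie in the past of such a point of `P`
(so `P` is directed, hence an IP) and all of `P` lies in the past of every point of `F`.
Conversely, a point `s` in the future of all of `P` satisfies `Ω ≤ t_s - f x_s`, again by
approaching `(Ω, x₀)` from inside `P`. Hence `↑P = F` and dually `↓F = P`, and the maximality
statements are immediate.
-/

section Indecomposable

variable {M : Type*} [MetricSpace M] {a b : EReal}

lemma isIP_of_directed {P : Set (ℝ × M)} (hne : P.Nonempty) (hpast : IsPastSet a b P)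
    (hdir : ∀ p ∈ P, ∀ q ∈ P, ∃ r ∈ P, Chron a b p r ∧ Chron a b q r) :
    IsIP a b P := by
  refine ⟨hne, hpast, fun P₁ P₂ h₁ h₂ hU => ?_⟩
  by_contra! ⟨hP₁, hP₂⟩
  obtain ⟨q₁, hq₁, hq₁P₂⟩ :=
    exists_of_ssubset ((hU ▸ subset_union_right).ssubset_of_ne hP₂)
  obtain ⟨q₂, hq₂, hq₂P₁⟩ :=
    exists_of_ssubset ((hU ▸ subset_union_left).ssubset_of_ne hP₁)
  obtain ⟨r, hr, hq₁r, hq₂r⟩ := hdir q₁ hq₁ q₂ hq₂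
  rcases hU ▸ hr with hr₁ | hr₂
  · exact hq₂P₁ (h₁ ▸ ⟨r, hr₁, hq₂r⟩)
  · exact hq₁P₂ (h₂ ▸ ⟨r, hr₂, hq₁r⟩)

lemma isIF_of_directed {F : Set (ℝ × M)} (hne : F.Nonempty) (hfut : IsFutureSet a b F)
    (hdir : ∀ p ∈ F, ∀ q ∈ F, ∃ r ∈ F, Chron a b r p ∧ Chron a b r q) :
    IsIF a b F := by
  refine ⟨hne, hfut, fun F₁ F₂ h₁ h₂ hU => ?_⟩
  by_contra! ⟨hF₁, hF₂⟩
  obtain ⟨q₁, hq₁, hq₁F₂⟩ :=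
    exists_of_ssubset ((hU ▸ subset_union_right).ssubset_of_ne hF₂)
  obtain ⟨q₂, hq₂, hq₂F₁⟩ :=
    exists_of_ssubset ((hU ▸ subset_union_left).ssubset_of_ne hF₁)
  obtain ⟨r, hr, hrq₁, hrq₂⟩ := hdir q₁ hq₁ q₂ hq₂
  rcases hU ▸ hr with hr₁ | hr₂
  · exact hq₂F₁ (h₁ ▸ ⟨r, hr₁, hrq₂⟩)
  · exact hq₁F₂ (h₂ ▸ ⟨r, hr₂, hrq₁⟩)

lemma sRel_of_commonFuture_eq {P F : Set (ℝ × M)} (hP : IsIP a b P) (hF : IsIF a b F)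
    (hFP : CommonFuture a b P = F) (hPF : CommonPast a b F = P) : SRel a b P F :=
  ⟨hP, hF, hPF.ge, hFP.ge, fun _ _ h h' => (hPF ▸ h).antisymm h',
    fun _ _ h h' => (hFP ▸ h).antisymm h'⟩

end Indecomposable

open UniformSpace

section LightCone

variable {M : Type*} [MetricSpace M] {a b : EReal} (x₀ : Completion M) {Ω : ℝ}
  {p q s : ℝ × M}

def pastCone (a b : EReal) (x₀ : Completion M) (Ω : ℝ) : Set (ℝ × M) :=
  {p | p ∈ Spacetime a b ∧ p.1 < Ω - dist (p.2 : Completion M) x₀}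

def futureCone (a b : EReal) (x₀ : Completion M) (Ω : ℝ) : Set (ℝ × M) :=
  {p | p ∈ Spacetime a b ∧ Ω + dist (p.2 : Completion M) x₀ < p.1}

lemma Chron.add_dist_lt (h : Chron a b p q) :
    p.1 + dist (p.2 : Completion M) x₀ < q.1 + dist (q.2 : Completion M) x₀ := by
  have := dist_triangle (p.2 : Completion M) q.2 x₀
  rw [Completion.dist_eq] at this
  linarith [h.2.2]

lemma Chron.sub_dist_lt (h : Chron a b p q) :
    p.1 - dist (p.2 : Completion M) x₀ < q.1 - dist (q.2 : Completion M) x₀ := by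
  have := dist_triangle (q.2 : Completion M) p.2 x₀
  rw [Completion.dist_eq, dist_comm q.2] at this
  linarith [h.2.2]

lemma chron_of_add_dist_lt (hp : p ∈ Spacetime a b) (hq : q ∈ Spacetime a b)
    (h : p.1 + dist (p.2 : Completion M) x₀ + dist (q.2 : Completion M) x₀ < q.1) :
    Chron a b p q := by
  have := dist_triangle_right (p.2 : Completion M) q.2 x₀
  rw [Completion.dist_eq] at this
  exact ⟨hp, hq, by linarith⟩

lemma chron_of_mem_pastCone_of_mem_futureCone (hp : p ∈ pastCone a b x₀ Ω)
    (hq : q ∈ futureCone a b x₀ Ω) : Chron a b p q :=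
  chron_of_add_dist_lt x₀ hp.1 hq.1 (by linarith [hp.2, hq.2])

lemma exists_mem_pastCone_near (ha : a < Ω) (hb : (Ω : EReal) < b) {δ : ℝ} (hδ : 0 < δ) :
    ∃ r ∈ pastCone a b x₀ Ω, Ω - δ < r.1 ∧ dist (r.2 : Completion M) x₀ < δ := by
  obtain ⟨t, hat, htΩ⟩ := EReal.exists_between_coe_real
    (max_lt ha (EReal.coe_lt_coe (sub_lt_self Ω hδ)))
  have htΩ' : t < Ω := EReal.coe_lt_coe_iff.mp htΩ
  have hΩt : Ω - δ < t := EReal.coe_lt_coe_iff.mp ((le_max_right _ _).trans_lt hat)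
  obtain ⟨x, hx⟩ := Metric.denseRange_iff.mp Completion.denseRange_coe x₀ (Ω - t)
    (sub_pos.mpr htΩ')
  rw [dist_comm] at hx
  have htV : (t, x) ∈ Spacetime a b := ⟨(le_max_left _ _).trans_lt hat, htΩ.trans hb⟩
  exact ⟨(t, x), ⟨htV, by simp only; linarith⟩, hΩt, by simp only; linarith⟩

lemma exists_mem_futureCone_near (ha : a < Ω) (hb : (Ω : EReal) < b) {δ : ℝ} (hδ : 0 < δ) :
    ∃ r ∈ futureCone a b x₀ Ω, r.1 < Ω + δ ∧ dist (r.2 : Completion M) x₀ < δ := by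
  obtain ⟨t, hΩt, htb⟩ := EReal.exists_between_coe_real
    (lt_min hb (EReal.coe_lt_coe (lt_add_of_pos_right Ω hδ)))
  have hΩt' : Ω < t := EReal.coe_lt_coe_iff.mp hΩt
  have htΩ : t < Ω + δ := EReal.coe_lt_coe_iff.mp (htb.trans_le (min_le_right _ _))
  obtain ⟨x, hx⟩ := Metric.denseRange_iff.mp Completion.denseRange_coe x₀ (t - Ω)
    (sub_pos.mpr hΩt')
  rw [dist_comm] at hx
  have htV : (t, x) ∈ Spacetime a b := ⟨ha.trans hΩt, htb.trans_le (min_le_left _ _)⟩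
  exact ⟨(t, x), ⟨htV, by simp only; linarith⟩, htΩ, by simp only; linarith⟩

variable {x₀}

lemma exists_pos_chron_of_mem_pastCone (hp : p ∈ pastCone a b x₀ Ω) :
    ∃ δ > 0, ∀ r ∈ Spacetime (M := M) a b,
      Ω - δ < r.1 → dist (r.2 : Completion M) x₀ < δ → Chron a b p r := by
  refine ⟨(Ω - dist (p.2 : Completion M) x₀ - p.1) / 2, by linarith [hp.2],
    fun r hr hΩr hrd => chron_of_add_dist_lt x₀ hp.1 hr ?_⟩
  linarith

lemma exists_pos_chron_of_mem_futureCone (hq : q ∈ futureCone a b x₀ Ω) :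
    ∃ δ > 0, ∀ r ∈ Spacetime (M := M) a b,
      r.1 < Ω + δ → dist (r.2 : Completion M) x₀ < δ → Chron a b r q := by
  refine ⟨(q.1 - Ω - dist (q.2 : Completion M) x₀) / 2, by linarith [hq.2],
    fun r hr hrΩ hrd => chron_of_add_dist_lt x₀ hr hq.1 ?_⟩
  linarith

lemma exists_chron_mem_pastCone (ha : a < Ω) (hb : (Ω : EReal) < b)
    (hp : p ∈ pastCone a b x₀ Ω) (hq : q ∈ pastCone a b x₀ Ω) :
    ∃ r ∈ pastCone a b x₀ Ω, Chron a b p r ∧ Chron a b q r := by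
  obtain ⟨δp, hδp, hp⟩ := exists_pos_chron_of_mem_pastCone hp
  obtain ⟨δq, hδq, hq⟩ := exists_pos_chron_of_mem_pastCone hq
  obtain ⟨r, hr, hΩr, hrd⟩ := exists_mem_pastCone_near x₀ ha hb (lt_min hδp hδq)
  exact ⟨r, hr,
    hp r hr.1 (by linarith [min_le_left δp δq]) (hrd.trans_le (min_le_left _ _)),
    hq r hr.1 (by linarith [min_le_right δp δq]) (hrd.trans_le (min_le_right _ _))⟩

lemma exists_chron_mem_futureCone (ha : a < Ω) (hb : (Ω : EReal) < b)
    (hp : p ∈ futureCone a b x₀ Ω) (hq : q ∈ futureCone a b x₀ Ω) :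
    ∃ r ∈ futureCone a b x₀ Ω, Chron a b r p ∧ Chron a b r q := by
  obtain ⟨δp, hδp, hp⟩ := exists_pos_chron_of_mem_futureCone hp
  obtain ⟨δq, hδq, hq⟩ := exists_pos_chron_of_mem_futureCone hq
  obtain ⟨r, hr, hrΩ, hrd⟩ := exists_mem_futureCone_near x₀ ha hb (lt_min hδp hδq)
  exact ⟨r, hr,
    hp r hr.1 (by linarith [min_le_left δp δq]) (hrd.trans_le (min_le_left _ _)),
    hq r hr.1 (by linarith [min_le_right δp δq]) (hrd.trans_le (min_le_right _ _))⟩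

lemma isPastSet_pastCone (ha : a < Ω) (hb : (Ω : EReal) < b) :
    IsPastSet a b (pastCone a b x₀ Ω) := by
  ext q
  constructor
  · rintro ⟨s, hs, hqs⟩
    exact ⟨hqs.1, by linarith [hqs.add_dist_lt x₀, hs.2]⟩
  · intro hq
    obtain ⟨r, hr, hqr, -⟩ := exists_chron_mem_pastCone ha hb hq hq
    exact ⟨r, hr, hqr⟩

lemma isFutureSet_futureCone (ha : a < Ω) (hb : (Ω : EReal) < b) :
    IsFutureSet a b (futureCone a b x₀ Ω) := by
  ext q
  constructor
  · rintro ⟨s, hs, hsq⟩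
    exact ⟨hsq.2.1, by linarith [hsq.sub_dist_lt x₀, hs.2]⟩
  · intro hq
    obtain ⟨r, hr, hrq, -⟩ := exists_chron_mem_futureCone ha hb hq hq
    exact ⟨r, hr, hrq⟩

lemma isIP_pastCone (ha : a < Ω) (hb : (Ω : EReal) < b) : IsIP a b (pastCone a b x₀ Ω) :=
  isIP_of_directed ((exists_mem_pastCone_near x₀ ha hb one_pos).imp fun _ h => h.1)
    (isPastSet_pastCone ha hb) fun _ hp _ hq => exists_chron_mem_pastCone ha hb hp hq

lemma isIF_futureCone (ha : a < Ω) (hb : (Ω : EReal) < b) : IsIF a b (futureCone a b x₀ Ω) :=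
  isIF_of_directed ((exists_mem_futureCone_near x₀ ha hb one_pos).imp fun _ h => h.1)
    (isFutureSet_futureCone ha hb) fun _ hp _ hq => exists_chron_mem_futureCone ha hb hp hq

lemma le_sub_dist_of_forall_chron (ha : a < Ω) (hb : (Ω : EReal) < b)
    (hs : ∀ p ∈ pastCone a b x₀ Ω, Chron a b p s) :
    Ω ≤ s.1 - dist (s.2 : Completion M) x₀ := by
  refine le_of_forall_pos_lt_add fun ε hε => ?_
  obtain ⟨r, hr, hΩr, hrd⟩ := exists_mem_pastCone_near x₀ ha hb (half_pos hε)
  linarith [(hs r hr).sub_dist_lt x₀]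

lemma add_dist_le_of_forall_chron (ha : a < Ω) (hb : (Ω : EReal) < b)
    (hs : ∀ f ∈ futureCone a b x₀ Ω, Chron a b s f) :
    s.1 + dist (s.2 : Completion M) x₀ ≤ Ω := by
  refine le_of_forall_pos_lt_add fun ε hε => ?_
  obtain ⟨r, hr, hrΩ, hrd⟩ := exists_mem_futureCone_near x₀ ha hb (half_pos hε)
  linarith [(hs r hr).add_dist_lt x₀]

lemma commonFuture_pastCone (ha : a < Ω) (hb : (Ω : EReal) < b) :
    CommonFuture a b (pastCone a b x₀ Ω) = futureCone a b x₀ Ω := by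
  ext q
  constructor
  · rintro ⟨s, ⟨-, hs⟩, hsq⟩
    exact ⟨hsq.2.1, by linarith [le_sub_dist_of_forall_chron ha hb hs, hsq.sub_dist_lt x₀]⟩
  · intro hq
    obtain ⟨δ, hδ, hchron⟩ := exists_pos_chron_of_mem_futureCone hq
    obtain ⟨s, hs, hsΩ, hsd⟩ := exists_mem_futureCone_near x₀ ha hb hδ
    exact ⟨s, ⟨hs.1, fun p hp => chron_of_mem_pastCone_of_mem_futureCone x₀ hp hs⟩,
      hchron s hs.1 hsΩ hsd⟩

lemma commonPast_futureCone (ha : a < Ω) (hb : (Ω : EReal) < b) :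
    CommonPast a b (futureCone a b x₀ Ω) = pastCone a b x₀ Ω := by
  ext q
  constructor
  · rintro ⟨s, ⟨-, hs⟩, hqs⟩
    exact ⟨hqs.1, by linarith [add_dist_le_of_forall_chron ha hb hs, hqs.add_dist_lt x₀]⟩
  · intro hq
    obtain ⟨δ, hδ, hchron⟩ := exists_pos_chron_of_mem_pastCone hq
    obtain ⟨s, hs, hΩs, hsd⟩ := exists_mem_pastCone_near x₀ ha hb hδ
    exact ⟨s, ⟨hs.1, fun f hf => chron_of_mem_pastCone_of_mem_futureCone x₀ hs hf⟩,
      hchron s hs.1 hΩs hsd⟩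

end LightCone

/-- For `x₀` in the completion of `M` and `Ω ∈ (a,b)`, the sets
`P = {(t',x') ∈ I×M : t' < Ω - d(x',x₀)}` and `F = {(t',x') ∈ I×M : t' > Ω + d(x',x₀)}`
satisfy: `P` is an IP, `F` is an IF, `P ⊆ ↓F`, `F ⊆ ↑P`, `P` is a maximal IP among IPs
contained in `↓F`, and `F` is a maximal IF among IFs contained in `↑P`; i.e. `P ∼ₛ F`
(all of which is the content of `SRel`). -/
theorem stmt1 {M : Type*} [MetricSpace M] (a b : EReal)
    (x₀ : UniformSpace.Completion M) (Ω : ℝ) (ha : a < (Ω : EReal)) (hb : (Ω : EReal) < b)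
    (P F : Set (ℝ × M))
    (hP : P = {p : ℝ × M | p ∈ Spacetime a b ∧
      p.1 < Ω - dist (p.2 : UniformSpace.Completion M) x₀})
    (hF : F = {p : ℝ × M | p ∈ Spacetime a b ∧
      Ω + dist (p.2 : UniformSpace.Completion M) x₀ < p.1}) :
    IsIP a b P ∧ IsIF a b F ∧ F ⊆ CommonFuture a b P ∧ P ⊆ CommonPast a b F ∧
      (∀ F' : Set (ℝ × M), IsIF a b F' → F' ⊆ CommonFuture a b P → F ⊆ F' → F' = F) ∧
      (∀ P' : Set (ℝ × M), IsIP a b P' → P' ⊆ CommonPast a b F → P ⊆ P' → P' = P) ∧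
      SRel a b P F := by
  change P = pastCone a b x₀ Ω at hP
  change F = futureCone a b x₀ Ω at hF
  subst hP hF
  have h : SRel a b (pastCone a b x₀ Ω) (futureCone a b x₀ Ω) :=
    sRel_of_commonFuture_eq (isIP_pastCone ha hb) (isIF_futureCone ha hb)
      (commonFuture_pastCone ha hb) (commonPast_futureCone ha hb)
  exact ⟨h.1, h.2.1, h.2.2.2.1, h.2.2.1, h.2.2.2.2.2, h.2.2.2.2.1, h⟩
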